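/- arXiv:2502.12424 — 3 statements merged into one kernel-verified Lean document; each statement's English description precedes it below -/
import Mathlib

section
/- Let φ_j(z) be the polynomials defined by the generating function Σ_{j=0}^∞ φ_j(z) ε^j = exp(z ε + Σ_{i≥1, (n+1)∤i} κ_i ε^i), where κ_i = z₀^i/i for a fixed nonzero complex number z₀ and all indices i not divisible by n+1. Then for every j ≥ 0, φ_j(0) = (Σ_{i=0}^{⌊j/(n+1)⌋} f_i) z₀^j, where the numbers f_i are defined by Σ_{i=0}^∞ f_i ε^{i(n+1)} = exp(−Σ_{j=1}^∞ ε^{j(n+1)}/(j(n+1))). -/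
open PowerSeries Finset

/-!
With `d = n + 1`, the exponent of `Φ` is the rescaling `ε ↦ z₀ε` of
`-log (1 - ε) + C(ε)`, where `C = -Σ_{d ∣ m} ε^m / m` is the exponent of `F`.
Since `exp` turns sums into products and `exp (-log (1 - ε)) = 1 / (1 - ε)`, we get
`Φ(ε) = F(z₀ε) / (1 - z₀ε)`, so `φ_j(0) = z₀^j Σ_{b ≤ j} [ε^b] F`, and only the `b` divisible
by `d` contribute. Identities for the formal `exp` are proved from the fact that `E = exp S` is the
unique solution of `E' = S' E`, `E(0) = 1`.
-/

/-- The exponential of a formal power series with zero constant coefficient,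
defined coefficientwise by `exp S = Σ_k S^k / k!`. -/
noncomputable def expPS (S : PowerSeries ℂ) : PowerSeries ℂ :=
  PowerSeries.mk fun j =>
    ∑ k ∈ Finset.range (j + 1), PowerSeries.coeff j (S ^ k) / (k.factorial : ℂ)

theorem PowerSeries.coeff_pow_eq_zero_of_lt {R : Type*} [Semiring R] {S : R⟦X⟧}
    (hS : constantCoeff S = 0) {j k : ℕ} (h : j < k) : coeff j (S ^ k) = 0 :=
  coeff_of_lt_order _ ((Nat.cast_lt.mpr h).trans_le (le_order_pow_of_constantCoeff_eq_zero k hS))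

theorem PowerSeries.eq_of_derivative_eq_mul {R : Type*} [CommRing R] [IsAddTorsionFree R]
    {g f h : R⟦X⟧} (hf : d⁄dX R f = g * f) (hh : d⁄dX R h = g * h)
    (h0 : constantCoeff f = constantCoeff h) : f = h := by
  ext j
  induction j using Nat.strong_induction_on with
  | _ j ih =>
    cases j with
    | zero => simpa using h0
    | succ j =>
      have hlow : coeff j (g * f) = coeff j (g * h) := by
        simp only [coeff_mul]
        exact sum_congr rfl fun p hp => by rw [ih p.2 (Nat.antidiagonal.snd_lt hp)]
      rw [← hf, ← hh, coeff_derivative, coeff_derivative] at hlow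
      refine nsmul_right_injective j.succ_ne_zero ?_
      simpa [nsmul_eq_mul, mul_comm] using hlow

theorem expPS_eq_subst_exp {S : ℂ⟦X⟧} (hS : constantCoeff S = 0) :
    expPS S = (exp ℂ).subst S := by
  ext j
  rw [coeff_subst' (HasSubst.of_constantCoeff_zero' hS),
    finsum_eq_sum_of_support_subset (s := range (j + 1))]
  · simp [expPS, div_eq_inv_mul]
  · intro k hk
    by_contra hkj
    simp only [coe_range, Set.mem_Iio, not_lt] at hkj
    exact hk (by simp [coeff_pow_eq_zero_of_lt hS (Nat.lt_of_succ_le hkj)])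

theorem derivative_expPS {S : ℂ⟦X⟧} (hS : constantCoeff S = 0) :
    d⁄dX ℂ (expPS S) = d⁄dX ℂ S * expPS S := by
  rw [expPS_eq_subst_exp hS, derivative_subst (HasSubst.of_constantCoeff_zero' hS),
    derivative_exp, mul_comm]

theorem constantCoeff_expPS (S : ℂ⟦X⟧) : constantCoeff (expPS S) = 1 := by
  rw [← coeff_zero_eq_constantCoeff_apply]
  simp [expPS]

theorem eq_expPS_of_derivative {S E : ℂ⟦X⟧} (hS : constantCoeff S = 0)
    (hE : d⁄dX ℂ E = d⁄dX ℂ S * E) (h0 : constantCoeff E = 1) : E = expPS S :=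
  eq_of_derivative_eq_mul hE (derivative_expPS hS) (by rw [h0, constantCoeff_expPS])

theorem expPS_add {S T : ℂ⟦X⟧} (hS : constantCoeff S = 0) (hT : constantCoeff T = 0) :
    expPS (S + T) = expPS S * expPS T := by
  refine (eq_expPS_of_derivative (by simp [hS, hT]) ?_ (by simp [constantCoeff_expPS])).symm
  rw [Derivation.leibniz, derivative_expPS hS, derivative_expPS hT, map_add, smul_eq_mul,
    smul_eq_mul]
  ring

theorem rescale_expPS (c : ℂ) (S : ℂ⟦X⟧) : rescale c (expPS S) = expPS (rescale c S) := by
  ext j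
  simp only [expPS, coeff_rescale, coeff_mk, mul_sum, ← map_pow, mul_div_assoc]

section DvdSupport

variable {R : Type*} [Semiring R] {d : ℕ}

theorem PowerSeries.coeff_mul_eq_zero_of_not_dvd {S T : R⟦X⟧}
    (hS : ∀ m, ¬ d ∣ m → coeff m S = 0) (hT : ∀ m, ¬ d ∣ m → coeff m T = 0)
    {m : ℕ} (hm : ¬ d ∣ m) : coeff m (S * T) = 0 := by
  rw [coeff_mul]
  refine sum_eq_zero fun p hp => ?_
  rw [HasAntidiagonal.mem_antidiagonal] at hp
  by_cases h1 : d ∣ p.1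
  · rw [hT p.2 fun h2 => hm (hp ▸ dvd_add h1 h2), mul_zero]
  · rw [hS p.1 h1, zero_mul]

theorem PowerSeries.coeff_pow_eq_zero_of_not_dvd {S : R⟦X⟧}
    (hS : ∀ m, ¬ d ∣ m → coeff m S = 0) (k : ℕ) {m : ℕ} (hm : ¬ d ∣ m) :
    coeff m (S ^ k) = 0 := by
  induction k generalizing m with
  | zero => rw [pow_zero, coeff_one, if_neg fun h : m = 0 => hm (h ▸ dvd_zero d)]
  | succ k ih => exact pow_succ S k ▸ coeff_mul_eq_zero_of_not_dvd (fun _ => ih) hS hm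

end DvdSupport

theorem coeff_expPS_eq_zero_of_not_dvd {d : ℕ} {S : ℂ⟦X⟧}
    (hS : ∀ m, ¬ d ∣ m → coeff m S = 0) {m : ℕ} (hm : ¬ d ∣ m) : coeff m (expPS S) = 0 := by
  simp [expPS, coeff_pow_eq_zero_of_not_dvd hS _ hm]

theorem Finset.sum_range_succ_eq_sum_range_div_succ_mul {M : Type*} [AddCommMonoid M] {d : ℕ}
    (hd : 0 < d) {c : ℕ → M} (hc : ∀ m, ¬ d ∣ m → c m = 0) (j : ℕ) :
    ∑ b ∈ range (j + 1), c b = ∑ i ∈ range (j / d + 1), c (i * d) := by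
  rw [← sum_image fun a _ b _ h => Nat.eq_of_mul_eq_mul_right hd h]
  refine (sum_subset (fun b hb => ?_) fun b hb hnot => hc b ?_).symm
  · obtain ⟨i, hi, rfl⟩ := mem_image.mp hb
    rw [mem_range, Nat.lt_succ_iff] at hi ⊢
    exact (Nat.le_div_iff_mul_le hd).mp hi
  · rintro ⟨i, rfl⟩
    refine hnot (mem_image.mpr ⟨i, ?_, mul_comm i d⟩)
    rw [mem_range, Nat.lt_succ_iff] at hb ⊢
    exact (Nat.le_div_iff_mul_le hd).mpr (mul_comm d i ▸ hb)

theorem PowerSeries.coeff_mul_mk_one {R : Type*} [Semiring R] (f : R⟦X⟧) (j : ℕ) :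
    coeff j (f * PowerSeries.mk 1) = ∑ b ∈ range (j + 1), coeff b f := by
  simp [coeff_mul, Nat.sum_antidiagonal_eq_sum_range_succ (fun a _ => coeff a f)]

theorem PowerSeries.derivative_mk_one {R : Type*} [CommSemiring R] :
    d⁄dX R (PowerSeries.mk 1) = PowerSeries.mk 1 * PowerSeries.mk 1 := by
  ext j
  simp [coeff_derivative, coeff_mul_mk_one]

/-- `-log (1 - X) = Σ_{i ≥ 1} X^i / i`; the `i = 0` coefficient is `(0 : ℂ)⁻¹ = 0`. -/
noncomputable def negLogOneSub : ℂ⟦X⟧ := PowerSeries.mk fun i => (i : ℂ)⁻¹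

theorem constantCoeff_negLogOneSub : constantCoeff negLogOneSub = 0 := by
  simp [← coeff_zero_eq_constantCoeff_apply, negLogOneSub]

theorem derivative_negLogOneSub : d⁄dX ℂ negLogOneSub = PowerSeries.mk 1 := by
  ext j
  simp only [coeff_derivative, negLogOneSub, coeff_mk, Pi.one_apply]
  push_cast
  exact inv_mul_cancel₀ (Nat.cast_add_one_ne_zero j)

theorem expPS_negLogOneSub : expPS negLogOneSub = PowerSeries.mk 1 :=
  (eq_expPS_of_derivative constantCoeff_negLogOneSub
    (by rw [derivative_negLogOneSub, derivative_mk_one]) (by simp)).symm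

theorem phi_constant_term_general (n : ℕ) (z₀ : ℂ)
    (Φ F : PowerSeries ℂ)
    (hΦ : Φ = expPS (PowerSeries.mk fun i =>
      if i ≠ 0 ∧ ¬ (n + 1) ∣ i then z₀ ^ i / (i : ℂ) else 0))
    (hF : F = expPS (PowerSeries.mk fun m =>
      if m ≠ 0 ∧ (n + 1) ∣ m then -(1 : ℂ) / (m : ℂ) else 0))
    (f : ℕ → ℂ) (hf : ∀ i, f i = PowerSeries.coeff (i * (n + 1)) F) :
    ∀ j : ℕ, PowerSeries.coeff j Φ =
      (∑ i ∈ Finset.range (j / (n + 1) + 1), f i) * z₀ ^ j := by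
  set C : ℂ⟦X⟧ := PowerSeries.mk fun m => if m ≠ 0 ∧ (n + 1) ∣ m then -(1 : ℂ) / (m : ℂ) else 0
  have hC0 : constantCoeff C = 0 := by simp [← coeff_zero_eq_constantCoeff_apply, C]
  have hCsupp : ∀ m, ¬ (n + 1) ∣ m → coeff m C = 0 := fun m hm => by simp [C, hm]
  have hΦF : Φ = rescale z₀ (F * PowerSeries.mk 1) := by
    rw [hΦ, hF, ← expPS_negLogOneSub, mul_comm, ← expPS_add constantCoeff_negLogOneSub hC0,
      rescale_expPS]
    congr 1
    ext i
    simp only [coeff_mk, coeff_rescale, map_add, negLogOneSub, C]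
    rcases eq_or_ne i 0 with rfl | hi
    · simp
    · by_cases hdi : n + 1 ∣ i <;> simp [hi, hdi, div_eq_mul_inv]
  intro j
  rw [hΦF, coeff_rescale, coeff_mul_mk_one,
    sum_range_succ_eq_sum_range_div_succ_mul n.succ_pos
      fun m hm => hF ▸ coeff_expPS_eq_zero_of_not_dvd hCsupp hm]
  simp only [hf, mul_comm]

/-- With `φ_j` defined by
`Σ_j φ_j(z) ε^j = exp(zε + Σ_{i≥1,(n+1)∤i} (z₀^i/i) ε^i)`, the constant terms
`φ_j(0)`, namely the coefficients of `exp(Σ_{i≥1,(n+1)∤i} (z₀^i/i) ε^i)`,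
satisfy `φ_j(0) = (Σ_{i=0}^{⌊j/(n+1)⌋} f_i) z₀^j`, where the `f_i` are defined
by `Σ_i f_i ε^{i(n+1)} = exp(−Σ_{j≥1} ε^{j(n+1)}/(j(n+1)))`. -/
theorem phi_constant_term (n : ℕ) (hn : 1 ≤ n) (z₀ : ℂ) (hz₀ : z₀ ≠ 0)
    (Φ F : PowerSeries ℂ)
    (hΦ : Φ = expPS (PowerSeries.mk fun i =>
      if i ≠ 0 ∧ ¬ (n + 1) ∣ i then z₀ ^ i / (i : ℂ) else 0))
    (hF : F = expPS (PowerSeries.mk fun m =>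
      if m ≠ 0 ∧ (n + 1) ∣ m then -(1 : ℂ) / (m : ℂ) else 0))
    (f : ℕ → ℂ) (hf : ∀ i, f i = PowerSeries.coeff (i * (n + 1)) F) :
    ∀ j : ℕ, PowerSeries.coeff j Φ =
      (∑ i ∈ Finset.range (j / (n + 1) + 1), f i) * z₀ ^ j :=
  phi_constant_term_general n z₀ Φ F hΦ hF f hf
end

section
/- The GMAM polynomial W_{[2,0]}(z) for n = 2 equals z⁴ + 4κ_{1,1}z³ + (6κ_{1,1}² + 4κ_{1,2})z² + (4κ_{1,1}³ + 8κ_{1,1}κ_{1,2})z + κ_{1,1}⁴ + 4κ_{1,2}κ_{1,1}² − 4κ_{1,2}² − 8κ_{1,4}. -/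
theorem hasDerivAt_phi14 {𝕜 : Type*} [NontriviallyNormedField 𝕜] [CharZero 𝕜] (κ1 κ2 κ4 z : 𝕜) :
    HasDerivAt (fun z : 𝕜 => (z + κ1) ^ 4 / 24 + κ2 * (z + κ1) ^ 2 / 2 + κ2 ^ 2 / 2 + κ4)
      ((z + κ1) ^ 3 / 6 + κ2 * (z + κ1)) z := by
  have hquartic := (((hasDerivAt_pow 4 (z + κ1)).div_const 24).fun_add
    (((hasDerivAt_pow 2 (z + κ1)).const_mul κ2).div_const 2)).comp_add_const z κ1
  exact ((hquartic.add_const (κ2 ^ 2 / 2)).add_const κ4).congr_deriv (by norm_num; ring)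

/-- the GMAM polynomial `W_{[2,0]}(z)` for `n = 2`, i.e. the
monic normalization `8·(φ_{1,1}(z) φ'_{1,4}(z) − φ'_{1,1}(z) φ_{1,4}(z))` of
the Wronskian of `φ_{1,1}` and `φ_{1,4}` (coefficients of
`exp(zε + κ_{1,1}ε + κ_{1,2}ε² + κ_{1,4}ε⁴ + …)`), equals
`z⁴ + 4κ_{1,1}z³ + (6κ_{1,1}² + 4κ_{1,2})z² + (4κ_{1,1}³ + 8κ_{1,1}κ_{1,2})z
 + κ_{1,1}⁴ + 4κ_{1,2}κ_{1,1}² − 4κ_{1,2}² − 8κ_{1,4}`. -/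
theorem gmam_W20 (κ1 κ2 κ4 : ℂ) (φ1 φ4 : ℂ → ℂ)
    (h1 : ∀ z, φ1 z = z + κ1)
    (h4 : ∀ z, φ4 z = (z + κ1) ^ 4 / 24 + κ2 * (z + κ1) ^ 2 / 2
      + κ2 ^ 2 / 2 + κ4) :
    ∀ z : ℂ,
      8 * (φ1 z * deriv φ4 z - deriv φ1 z * φ4 z)
        = z ^ 4 + 4 * κ1 * z ^ 3 + (6 * κ1 ^ 2 + 4 * κ2) * z ^ 2
          + (4 * κ1 ^ 3 + 8 * κ1 * κ2) * z
          + κ1 ^ 4 + 4 * κ2 * κ1 ^ 2 - 4 * κ2 ^ 2 - 8 * κ4 := by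
  obtain rfl : φ1 = fun z => z + κ1 := funext h1
  obtain rfl : φ4 = fun z => (z + κ1) ^ 4 / 24 + κ2 * (z + κ1) ^ 2 / 2 + κ2 ^ 2 / 2 + κ4 :=
    funext h4
  intro z
  rw [(hasDerivAt_phi14 κ1 κ2 κ4 z).deriv, deriv_add_const, deriv_id'']
  ring
end

section
/- Let n ≥ 1, λ₀ ∈ ℂ with Im(λ₀) ≠ 0, and set a_k = (2Im(λ₀)/(n+1))·csc(kπ/(n+1)) and b_k = (2Im(λ₀)/(n+1))·cot(kπ/(n+1)) − 2Re(λ₀) for 1 ≤ k ≤ n, and χ₀ = 2Re(λ₀) + 2i Im(λ₀)/(n+1). Then the polynomial P(χ) = (χ − 2λ₀ − Σ_{k=1}^n a_k²/(χ + b_k)) · Π_{k=1}^n (χ + b_k) satisfies P(χ) = (χ − χ₀)^{n+1}; in particular χ₀ is a root of multiplicity n+1 of the characteristic equation P(χ) = 0. -/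
/-!
Put `t = 2 Im λ₀ / (n + 1)`, `θ_k = kπ/(n + 1)` and `χ = 2 Re λ₀ + t z`. Then
`χ + b_k = t (z + cot θ_k)`, `a_k² = t² (1 + cot² θ_k)`, `χ - 2λ₀ = t (z - (n + 1) i)` and
`χ - χ₀ = t (z - i)`, so after scaling out `t^(n+1)` one may take `Re λ₀ = 0`,
`Im λ₀ = (n + 1)/2`.

The numbers `-cot θ_k` are the `n` roots of `(z + i)^(n+1) - (z - i)^(n+1)`, hence
`R(z) = ∏_k (z + cot θ_k)` equals that polynomial divided by `2i(n + 1)`. Since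
`1 + r² = (1 + z²) - (z + r)(z - r)` and `∑_k cot θ_k = 0`, the sum of the partial fractions
times `R` is `(1 + z²) R' - n z R`, so the normalized characteristic polynomial is
`(n + 1)(z - i) R - (1 + z²) R'`, which the closed form of `R` turns into `(z - i)^(n+1)`.
-/

open Finset Real Polynomial

theorem Complex.cot_add_I_pow_eq_cot_sub_I_pow {z : ℂ} (hz : Complex.sin z ≠ 0) {m : ℕ}
    (hm : Complex.sin (m * z) = 0) :
    (Complex.cot z + Complex.I) ^ m = (Complex.cot z - Complex.I) ^ m := by
  have hplus : Complex.cot z + Complex.I =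
      (Complex.cos z + Complex.sin z * Complex.I) / Complex.sin z := by
    rw [Complex.cot_eq_cos_div_sin]
    field_simp
  have hminus : Complex.cot z - Complex.I =
      (Complex.cos (-z) + Complex.sin (-z) * Complex.I) / Complex.sin z := by
    rw [Complex.cot_eq_cos_div_sin, Complex.cos_neg, Complex.sin_neg]
    field_simp
    ring
  rw [hplus, hminus, div_pow, div_pow, Complex.cos_add_sin_mul_I_pow,
    Complex.cos_add_sin_mul_I_pow, mul_neg, Complex.sin_neg, Complex.cos_neg, hm, neg_zero]

theorem inv_sin_sq_eq_one_add_cot_sq {x : ℝ} (hx : sin x ≠ 0) :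
    (sin x)⁻¹ ^ 2 = 1 + cot x ^ 2 := by
  rw [cot_eq_cos_div_sin]
  field_simp
  linear_combination -sin_sq_add_cos_sq x

theorem eq_C_coeff_mul_nodal {K ι : Type*} [Field K] [Fintype ι] {v : ι → K}
    (hv : Function.Injective v) {p : K[X]} (hdeg : p.natDegree ≤ Fintype.card ι)
    (hroot : ∀ i, p.IsRoot (v i)) :
    p = C (p.coeff (Fintype.card ι)) * Lagrange.nodal univ v := by
  have hdvd : Lagrange.nodal univ v ∣ p := by
    rw [Lagrange.nodal_eq]
    exact Fintype.prod_dvd_of_coprime (pairwise_coprime_X_sub_C hv)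
      fun i => dvd_iff_isRoot.2 (hroot i)
  have hcard : (Lagrange.nodal univ v).natDegree = Fintype.card ι := by
    rw [Lagrange.natDegree_nodal, card_univ]
  have h := eq_leadingCoeff_mul_of_monic_of_dvd_of_natDegree_le Lagrange.nodal_monic hdvd
    (hcard ▸ hdeg)
  have hcoeff : p.coeff (Fintype.card ι) = p.leadingCoeff := by
    conv_lhs => rw [h]
    rw [coeff_C_mul, ← hcard, Lagrange.nodal_monic.coeff_natDegree, mul_one]
  rwa [hcoeff]

theorem natDegree_X_add_C_pow_sub_X_add_C_pow_le {R : Type*} [CommRing R] (a b : R) (n : ℕ) :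
    ((X + C a) ^ (n + 1) - (X + C b) ^ (n + 1)).natDegree ≤ n := by
  rw [natDegree_le_iff_coeff_eq_zero]
  intro N hN
  rw [coeff_sub, coeff_X_add_C_pow, coeff_X_add_C_pow]
  obtain rfl | hN := eq_or_lt_of_le (Nat.succ_le_of_lt hN)
  · simp
  · simp [Nat.choose_eq_zero_of_lt hN]

theorem coeff_X_add_C_pow_sub_X_add_C_pow {R : Type*} [CommRing R] (a b : R) (n : ℕ) :
    ((X + C a) ^ (n + 1) - (X + C b) ^ (n + 1)).coeff n = (n + 1) * (a - b) := by
  rw [coeff_sub, coeff_X_add_C_pow, coeff_X_add_C_pow, Nat.add_sub_cancel_left,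
    Nat.choose_succ_self_right]
  push_cast
  ring

theorem sum_C_mul_nodal_erase {R ι : Type*} [CommRing R] [DecidableEq ι] (s : Finset ι)
    (v : ι → R) :
    ∑ i ∈ s, C (1 + v i ^ 2) * Lagrange.nodal (s.erase i) v =
      (1 + X ^ 2) * derivative (Lagrange.nodal s v) -
        (∑ i ∈ s, (X + C (v i))) * Lagrange.nodal s v := by
  rw [Lagrange.derivative_nodal, mul_sum, sum_mul, ← sum_sub_distrib]
  refine sum_congr rfl fun i hi => ?_
  rw [Lagrange.nodal_eq_mul_nodal_erase hi, map_add, map_one, map_pow]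
  ring

theorem sum_div_mul_prod {K ι : Type*} [Field K] [DecidableEq ι] (s : Finset ι) (w x : ι → K)
    (hx : ∀ i ∈ s, x i ≠ 0) :
    (∑ i ∈ s, w i / x i) * ∏ i ∈ s, x i = ∑ i ∈ s, w i * ∏ j ∈ s.erase i, x j := by
  rw [sum_mul]
  refine sum_congr rfl fun i hi => ?_
  rw [← mul_prod_erase s x hi]
  field_simp [hx i hi]

theorem mul_sub_sum_div_mul_prod {K ι : Type*} [Field K] (s : Finset ι) {t : K} (ht : t ≠ 0)
    (u : K) (w x : ι → K) :
    (t * u - ∑ i ∈ s, t ^ 2 * w i / (t * x i)) * ∏ i ∈ s, t * x i =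
      t ^ (#s + 1) * ((u - ∑ i ∈ s, w i / x i) * ∏ i ∈ s, x i) := by
  have hterm : ∀ i, t ^ 2 * w i / (t * x i) = t * (w i / x i) := fun i => by
    rw [pow_two, mul_assoc, mul_div_mul_left _ _ ht, mul_div_assoc]
  rw [sum_congr rfl fun i _ => hterm i, ← mul_sum, ← mul_sub, prod_mul_distrib, prod_const]
  ring

-- `equiAngle n k` is the angle `θ_(k+1)` of the header.
noncomputable def equiAngle (n : ℕ) (k : Fin n) : ℝ := ((k : ℕ) + 1) * π / (n + 1)

theorem equiAngle_pos (n : ℕ) (k : Fin n) : 0 < equiAngle n k := by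
  unfold equiAngle; positivity

theorem equiAngle_lt_pi (n : ℕ) (k : Fin n) : equiAngle n k < π := by
  have hk : ((k : ℕ) : ℝ) + 1 < n + 1 := by exact_mod_cast Nat.succ_lt_succ k.2
  rw [equiAngle, div_lt_iff₀ (by positivity)]
  nlinarith [pi_pos]

theorem sin_equiAngle_pos (n : ℕ) (k : Fin n) : 0 < sin (equiAngle n k) :=
  sin_pos_of_pos_of_lt_pi (equiAngle_pos n k) (equiAngle_lt_pi n k)

theorem equiAngle_rev (n : ℕ) (k : Fin n) : equiAngle n k.rev = π - equiAngle n k := by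
  have hk : ((k.rev : ℕ) : ℝ) + 1 = n - k := by
    rw [Fin.val_rev]; push_cast [Nat.sub_sub, Nat.cast_sub (Nat.succ_le_of_lt k.2)]; ring
  rw [equiAngle, equiAngle, hk]
  field_simp
  ring

theorem sum_cot_equiAngle (n : ℕ) : ∑ k : Fin n, cot (equiAngle n k) = 0 := by
  have hrev := Equiv.sum_comp Fin.revPerm (fun k => cot (equiAngle n k))
  simp only [Fin.revPerm_apply, equiAngle_rev, cot_eq_cos_div_sin, cos_pi_sub, sin_pi_sub,
    neg_div, sum_neg_distrib] at hrev ⊢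
  linarith

theorem cot_equiAngle_strictAnti (n : ℕ) : StrictAnti (fun k : Fin n => cot (equiAngle n k)) := by
  intro j k hjk
  have hθ : equiAngle n j < equiAngle n k := by
    unfold equiAngle; gcongr; exact_mod_cast hjk
  have hsin : 0 < sin (equiAngle n k - equiAngle n j) :=
    sin_pos_of_pos_of_lt_pi (by linarith) (by linarith [equiAngle_pos n j, equiAngle_lt_pi n k])
  have hj := sin_equiAngle_pos n j
  have hk := sin_equiAngle_pos n k
  rw [sin_sub] at hsin
  simp only [cot_eq_cos_div_sin]
  rw [div_lt_div_iff₀ hk hj]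
  linarith

theorem Complex.sin_succ_mul_equiAngle (n : ℕ) (k : Fin n) :
    Complex.sin (((n + 1 : ℕ) : ℂ) * (equiAngle n k : ℂ)) = 0 := by
  have h : ((n + 1 : ℕ) : ℂ) * (equiAngle n k : ℂ) = ((k + 1 : ℕ) : ℂ) * π := by
    rw [equiAngle]; push_cast; field_simp
  rw [h, Complex.sin_nat_mul_pi]

theorem X_add_I_pow_sub_X_sub_I_pow (n : ℕ) :
    (X + C Complex.I) ^ (n + 1) - (X - C Complex.I) ^ (n + 1) =
      C (2 * Complex.I * (n + 1)) *
        Lagrange.nodal univ (fun k : Fin n => -(cot (equiAngle n k) : ℂ)) := by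
  have hinj : Function.Injective (fun k : Fin n => -(cot (equiAngle n k) : ℂ)) :=
    neg_injective.comp (Complex.ofReal_injective.comp (cot_equiAngle_strictAnti n).injective)
  have hroot : ∀ k : Fin n,
      ((X + C Complex.I) ^ (n + 1) - (X + C (-Complex.I)) ^ (n + 1)).IsRoot
        (-(cot (equiAngle n k) : ℂ)) := by
    intro k
    have hsin : Complex.sin (equiAngle n k) ≠ 0 := by
      rw [← Complex.ofReal_sin]; exact_mod_cast (sin_equiAngle_pos n k).ne'
    have h := Complex.cot_add_I_pow_eq_cot_sub_I_pow hsin (Complex.sin_succ_mul_equiAngle n k)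
    simp only [IsRoot.def, eval_sub, eval_pow, eval_add, eval_X, eval_C, Complex.ofReal_cot]
    set c := Complex.cot (equiAngle n k)
    rw [show -c + Complex.I = -(c - Complex.I) by ring,
      show -c + -Complex.I = -(c + Complex.I) by ring, neg_pow (c - Complex.I),
      neg_pow (c + Complex.I), h, sub_self]
  have key := eq_C_coeff_mul_nodal hinj
    ((natDegree_X_add_C_pow_sub_X_add_C_pow_le _ _ n).trans (Fintype.card_fin n).ge) hroot
  rw [Fintype.card_fin, coeff_X_add_C_pow_sub_X_add_C_pow] at key
  rw [sub_eq_add_neg X, ← C_neg, key]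
  congr 2
  ring

theorem normalized_charPoly_eq_X_sub_I_pow (n : ℕ) :
    (X - C ((n + 1) * Complex.I)) *
        Lagrange.nodal univ (fun k : Fin n => -(cot (equiAngle n k) : ℂ)) -
      ∑ k : Fin n, C (1 + (cot (equiAngle n k) : ℂ) ^ 2) *
        Lagrange.nodal (univ.erase k) (fun k : Fin n => -(cot (equiAngle n k) : ℂ)) =
      (X - C Complex.I) ^ (n + 1) := by
  have hsum := sum_C_mul_nodal_erase univ (fun k : Fin n => -(cot (equiAngle n k) : ℂ))
  have hcot : ∑ k : Fin n, (X + C (-(cot (equiAngle n k) : ℂ))) = (n : ℂ[X]) * X := by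
    rw [sum_add_distrib, ← map_sum, sum_neg_distrib, ← Complex.ofReal_sum, sum_cot_equiAngle]
    simp
  simp only [neg_sq, hcot] at hsum
  have hR := X_add_I_pow_sub_X_sub_I_pow n
  have hR' := congrArg derivative hR
  simp only [derivative_sub, derivative_X_add_C_pow, derivative_X_sub_C_pow, derivative_C_mul,
    Nat.add_sub_cancel] at hR'
  have hI : C Complex.I ^ 2 = -1 := by rw [← map_pow, Complex.I_sq, map_neg, map_one]
  have hc : C (2 * Complex.I * (n + 1)) ≠ 0 := by
    rw [Ne, C_eq_zero]
    exact mul_ne_zero (mul_ne_zero two_ne_zero Complex.I_ne_zero) (Nat.cast_add_one_ne_zero n)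
  rw [hsum]
  apply mul_left_cancel₀ hc
  simp only [pow_succ, map_mul, map_add, map_natCast, map_one, map_ofNat, Nat.cast_add,
    Nat.cast_one] at hR hR' ⊢
  linear_combination (((n : ℂ[X]) + 1) * C Complex.I - ((n : ℂ[X]) + 1) * X) * hR
    + (1 + X ^ 2) * hR'
    + ((n : ℂ[X]) + 1) * ((X - C Complex.I) ^ n - (X + C Complex.I) ^ n) * hI

theorem normalized_characteristic_eq_sub_I_pow (n : ℕ) (z : ℂ)
    (hz : ∀ k : Fin n, z + cot (equiAngle n k) ≠ 0) :
    (z - (n + 1) * Complex.I -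
        ∑ k : Fin n, (1 + (cot (equiAngle n k) : ℂ) ^ 2) / (z + cot (equiAngle n k))) *
      ∏ k : Fin n, (z + cot (equiAngle n k)) = (z - Complex.I) ^ (n + 1) := by
  rw [sub_mul, sum_div_mul_prod _ _ _ fun k _ => hz k]
  simpa [Lagrange.eval_nodal, eval_finsetSum] using
    congrArg (eval z) (normalized_charPoly_eq_X_sub_I_pow n)

theorem characteristic_poly_multiple_root_general (n : ℕ) (lam0 : ℂ)
    (him : lam0.im ≠ 0) (a b : Fin n → ℝ)
    (ha : ∀ k : Fin n, a k =
      2 * lam0.im / (n + 1) * (Real.sin (((k : ℕ) + 1) * Real.pi / (n + 1)))⁻¹)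
    (hb : ∀ k : Fin n, b k =
      2 * lam0.im / (n + 1) *
          (Real.cos (((k : ℕ) + 1) * Real.pi / (n + 1)) /
            Real.sin (((k : ℕ) + 1) * Real.pi / (n + 1)))
        - 2 * lam0.re)
    (chi0 : ℂ)
    (hchi0 : chi0 = 2 * (lam0.re : ℂ) + Complex.I * (2 * lam0.im / (n + 1))) :
    ∀ chi : ℂ, (∀ k : Fin n, chi + (b k : ℂ) ≠ 0) →
      (chi - 2 * lam0 - ∑ k : Fin n, ((a k : ℂ)) ^ 2 / (chi + (b k : ℂ))) *
          ∏ k : Fin n, (chi + (b k : ℂ))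
        = (chi - chi0) ^ (n + 1) := by
  intro chi hden
  obtain ⟨t, ht⟩ : ∃ t : ℝ, t = 2 * lam0.im / (n + 1) := ⟨_, rfl⟩
  have htn : (t : ℂ) * (n + 1) = 2 * lam0.im := by
    rw [ht]; push_cast; field_simp
  have ht0 : (t : ℂ) ≠ 0 := left_ne_zero_of_mul (by rw [htn]; simpa using him)
  obtain ⟨z, rfl⟩ : ∃ z : ℂ, chi = 2 * lam0.re + t * z :=
    ⟨(chi - 2 * lam0.re) / t, by field_simp; ring⟩
  have hb' : ∀ k, 2 * lam0.re + t * z + (b k : ℂ) = t * (z + cot (equiAngle n k)) := by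
    intro k
    have hbk : b k = t * cot (equiAngle n k) - 2 * lam0.re := by
      rw [hb k, ht, equiAngle, cot_eq_cos_div_sin]
    rw [hbk, Complex.ofReal_sub, Complex.ofReal_mul, Complex.ofReal_mul, Complex.ofReal_ofNat]
    ring
  have ha' : ∀ k, (a k : ℂ) ^ 2 = t ^ 2 * (1 + (cot (equiAngle n k) : ℂ) ^ 2) := by
    intro k
    have hak : a k ^ 2 = t ^ 2 * (1 + cot (equiAngle n k) ^ 2) := by
      rw [ha k, ← ht, ← equiAngle, mul_pow,
        inv_sin_sq_eq_one_add_cot_sq (sin_equiAngle_pos n k).ne']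
    exact_mod_cast hak
  have hlam : 2 * lam0.re + t * z - 2 * lam0 = t * (z - (n + 1) * Complex.I) := by
    linear_combination 2 * Complex.re_add_im lam0 + Complex.I * htn
  have hchi : 2 * lam0.re + t * z - chi0 = t * (z - Complex.I) := by
    rw [hchi0, ← htn]
    field_simp
    ring
  have hz : ∀ k, z + cot (equiAngle n k) ≠ 0 := fun k =>
    right_ne_zero_of_mul (hb' k ▸ hden k)
  simp only [ha', hb', hlam]
  rw [mul_sub_sum_div_mul_prod univ ht0, card_fin, normalized_characteristic_eq_sub_I_pow n z hz,
    hchi, mul_pow]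

/-- with `a_k = (2 Im λ₀/(n+1)) csc(kπ/(n+1))`,
`b_k = (2 Im λ₀/(n+1)) cot(kπ/(n+1)) − 2 Re λ₀` and
`χ₀ = 2 Re λ₀ + 2i Im λ₀/(n+1)`, the characteristic polynomial
`P(χ) = (χ − 2λ₀ − Σ_k a_k²/(χ+b_k)) Π_k (χ+b_k)` equals `(χ − χ₀)^{n+1}`;
in particular `χ₀` is a root of multiplicity `n+1`. -/
theorem characteristic_poly_multiple_root (n : ℕ) (hn : 1 ≤ n) (lam0 : ℂ)
    (him : lam0.im ≠ 0) (a b : Fin n → ℝ)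
    (ha : ∀ k : Fin n, a k =
      2 * lam0.im / (n + 1) * (Real.sin (((k : ℕ) + 1) * Real.pi / (n + 1)))⁻¹)
    (hb : ∀ k : Fin n, b k =
      2 * lam0.im / (n + 1) *
          (Real.cos (((k : ℕ) + 1) * Real.pi / (n + 1)) /
            Real.sin (((k : ℕ) + 1) * Real.pi / (n + 1)))
        - 2 * lam0.re)
    (chi0 : ℂ)
    (hchi0 : chi0 = 2 * (lam0.re : ℂ) + Complex.I * (2 * lam0.im / (n + 1))) :
    ∀ chi : ℂ, (∀ k : Fin n, chi + (b k : ℂ) ≠ 0) →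
      (chi - 2 * lam0 - ∑ k : Fin n, ((a k : ℂ)) ^ 2 / (chi + (b k : ℂ))) *
          ∏ k : Fin n, (chi + (b k : ℂ))
        = (chi - chi0) ^ (n + 1) :=
  characteristic_poly_multiple_root_general n lam0 him a b ha hb chi0 hchi0
end
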